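/- (Reduction for transitive groups) Let G be a transitive but imprimitive permutation group on a finite set Ω with |Ω| = n, and let G_x be a point stabilizer. Then there exist a transitive permutation group X on a set of size t ≥ 2 with point stabilizer X_α, and a transitive permutation group Y on a set of size m ≥ 2 with point stabilizer Y_β, such that t·m ≤ n and |Comp_A(G_x)| ≤ |Comp_A(X_α)| + |Comp_A(Y_β)| + log₂ n. -/

import Mathlib

open Equiv

/-- `c` is a composition series of the group `G`, running from the trivial subgroup to `G`,
in which each term is normal in the next and there is no intermediate normal subgroup
(equivalently, each successive quotient is simple). -/
def IsCompositionChain {G : Type*} [Group G] {n : ℕ} (c : Fin (n + 1) → Subgroup G) : Prop :=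
  c 0 = ⊥ ∧ c (Fin.last n) = ⊤ ∧
    ∀ i : Fin n,
      c i.castSucc < c i.succ ∧
        ((c i.castSucc).subgroupOf (c i.succ)).Normal ∧
          ∀ K : Subgroup G, c i.castSucc < K → K ≤ c i.succ →
            (K.subgroupOf (c i.succ)).Normal → K = c i.succ

/-- The group `S` occurs as a composition factor of the group `G`: some composition series
of `G` has a step `c i ⊴ c (i+1)` whose quotient is isomorphic to `S` (expressed via a
surjective homomorphism from `c (i+1)` onto `S` with kernel `c i`). -/
def IsCompFactor (S : Type*) [Group S] (G : Type*) [Group G] : Prop :=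
  ∃ (n : ℕ) (c : Fin (n + 1) → Subgroup G), IsCompositionChain c ∧
    ∃ (i : Fin n) (f : ↥(c i.succ) →* S),
      Function.Surjective f ∧ f.ker = (c i.castSucc).subgroupOf (c i.succ)

/-- The cyclic group of (prime) order `p` occurs as a composition factor of `G`. -/
def HasCyclicCompFactor (G : Type*) [Group G] (p : ℕ) : Prop :=
  IsCompFactor (Multiplicative (ZMod p)) G

/-- The number of distinct primes `p` such that the cyclic group of order `p` occurs as a
composition factor of `G`; this is the number of isomorphism types of abelian composition
factors of `G`, i.e. `|Comp_A(G)|`. -/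
noncomputable def abelianCompFactorCount (G : Type*) [Group G] : ℕ :=
  {p : ℕ | p.Prime ∧ HasCyclicCompFactor G p}.ncard

/-- A permutation group `G ≤ Sym(Ω)` is transitive. -/
def IsTransitivePermGroup {Ω : Type*} (G : Subgroup (Equiv.Perm Ω)) : Prop :=
  ∀ a b : Ω, ∃ g ∈ G, g a = b

/-- `B` is a block for the permutation group `G ≤ Sym(Ω)`: every `g ∈ G` maps `B`
either onto itself or onto a set disjoint from `B`. -/
def IsBlockOf {Ω : Type*} (G : Subgroup (Equiv.Perm Ω)) (B : Set Ω) : Prop :=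
  ∀ g ∈ G, (g : Equiv.Perm Ω) '' B = B ∨ Disjoint ((g : Equiv.Perm Ω) '' B) B

/-- A permutation group `G ≤ Sym(Ω)` is primitive: it is transitive and all of its blocks
are trivial (subsingletons or all of `Ω`). -/
def IsPrimitivePermGroup {Ω : Type*} (G : Subgroup (Equiv.Perm Ω)) : Prop :=
  IsTransitivePermGroup G ∧ ∀ B : Set Ω, IsBlockOf G B → B.Subsingleton ∨ B = Set.univ

/-- The restriction homomorphism `H → Sym(Δ)` for a subgroup `H ≤ Sym(Ω)` leaving the
subset `Δ ⊆ Ω` invariant; its image is the permutation group `H^Δ` induced by `H` on `Δ`. -/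
def inducedPermHom {Ω : Type*} (H : Subgroup (Equiv.Perm Ω)) (Δ : Set Ω)
    (hinv : ∀ g ∈ H, ∀ a ∈ Δ, g a ∈ Δ) : ↥H →* Equiv.Perm ↥Δ where
  toFun g := Equiv.Perm.subtypePerm (g : Equiv.Perm Ω)
    (fun a => ⟨fun ha => by
      have h' := hinv _ (H.inv_mem g.2) _ ha
      simpa using h', fun ha => hinv g g.2 a ha⟩)
  map_one' := rfl
  map_mul' g₁ g₂ := rfl


/-!
Write `P(H)` for the set of primes `p` such that `ℤ/p` is a quotient of a subnormal subgroup
of `H`; for finite `H` this is `Comp_A(H)`. It satisfies `P(H) ⊆ P(N) ∪ P(H/N)` for `N ⊴ H`,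
`P(N) ⊆ P(H)` for `N` subnormal, `P(H) ⊆ P(Q)` if `H` is a subdirect product of copies of `Q`,
and every prime of `P(H) \ P(S)` divides `[H : S]`, because a subnormal `K` has
`[K : K ∩ S] ∣ [H : S]`.

Let `B ∋ x` be a nontrivial block of `G`, `X` the group induced on `B` by its setwise
stabiliser `G_B`, and `Y` the group induced on the `m = n / |B|` translates of `B`. Then `X_x` is
the quotient of `G_x` by the pointwise stabiliser of `B`, which is normal in `G_B`; `Y_B` is the
quotient of `G_B` by the kernel `K` of the action on blocks; and `K` is a subdirect product of
copies of its restriction to `B`, a normal subgroup of `X`. Hence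
`P(G_x) ⊆ P(X_x) ∪ P(Y_B) ∪ (P(X) \ P(X_x))`, and the last set consists of primes dividing
`|B|`, of which there are at most `log₂ |B| ≤ log₂ n`.
-/

open MulAction Pointwise Subgroup

section CyclicFactorPrimes

variable {G Q : Type*} [Group G] [Group Q] {p : ℕ}

/-- For finite `G` these are the primes `p` for which `ℤ/p` is a composition factor
(`abelianCompFactorCount_eq_ncard`). -/
def cyclicFactorPrimes (G : Type*) [Group G] : Set ℕ :=
  {p | p.Prime ∧ ∃ K : Subgroup G, K.IsSubnormal ∧
    ∃ f : K →* Multiplicative (ZMod p), Function.Surjective f}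

lemma eq_bot_or_eq_top_of_multiplicative_zmod (hp : p.Prime)
    (T : Subgroup (Multiplicative (ZMod p))) : T = ⊥ ∨ T = ⊤ := by
  have : Fact p.Prime := ⟨hp⟩
  have : Fact (Nat.card (Multiplicative (ZMod p))).Prime := ⟨by simpa using hp⟩
  exact T.eq_bot_or_eq_top_of_prime_card

lemma cyclicFactorPrimes_subset_of_surjective (φ : G →* Q) (hφ : Function.Surjective φ) :
    cyclicFactorPrimes Q ⊆ cyclicFactorPrimes G := by
  rintro p ⟨hp, K, hK, f, hf⟩
  exact ⟨hp, K.comap φ, hK.comap φ, f.comp (φ.subgroupComap K),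
    hf.comp (φ.subgroupComap_surjective_of_surjective K hφ)⟩

lemma cyclicFactorPrimes_congr (e : G ≃* Q) : cyclicFactorPrimes G = cyclicFactorPrimes Q :=
  (cyclicFactorPrimes_subset_of_surjective e.symm.toMonoidHom e.symm.surjective).antisymm
    (cyclicFactorPrimes_subset_of_surjective e.toMonoidHom e.surjective)

lemma cyclicFactorPrimes_subset_of_isSubnormal {N : Subgroup G} (hN : N.IsSubnormal) :
    cyclicFactorPrimes N ⊆ cyclicFactorPrimes G := by
  rintro p ⟨hp, K, hK, f, hf⟩
  let e := K.equivMapOfInjective N.subtype N.subtype_injective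
  exact ⟨hp, K.map N.subtype, hK.trans' hN, f.comp e.symm.toMonoidHom,
    hf.comp e.symm.surjective⟩

lemma cyclicFactorPrimes_subset_primeFactors [Finite G] :
    cyclicFactorPrimes G ⊆ (Nat.card G).primeFactors := by
  rintro p ⟨hp, K, -, f, hf⟩
  have : Fact p.Prime := ⟨hp⟩
  refine Nat.mem_primeFactors.2 ⟨hp, ?_, Nat.card_pos.ne'⟩
  calc p = Nat.card (Multiplicative (ZMod p)) := by simp
    _ ∣ Nat.card K := Subgroup.card_dvd_of_surjective f hf
    _ ∣ Nat.card G := K.card_subgroup_dvd_card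

lemma cyclicFactorPrimes_finite [Finite G] : (cyclicFactorPrimes G).Finite :=
  (Nat.card G).primeFactors.finite_toSet.subset cyclicFactorPrimes_subset_primeFactors

lemma cyclicFactorPrimes_eq_empty [Subsingleton G] : cyclicFactorPrimes G = ∅ :=
  Set.subset_empty_iff.1 <| cyclicFactorPrimes_subset_primeFactors.trans (by simp)

lemma mem_cyclicFactorPrimes_or_subgroupOf_le_ker (hp : p.Prime) {K : Subgroup G}
    (hK : K.IsSubnormal) (f : K →* Multiplicative (ZMod p)) (L : Subgroup G) :
    p ∈ cyclicFactorPrimes L ∨ L.subgroupOf K ≤ f.ker := by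
  let g := f.comp (L.subtype.subgroupComap K)
  rcases eq_bot_or_eq_top_of_multiplicative_zmod hp g.range with hg | hg
  · exact .inr fun k hk => show g ⟨⟨k, hk⟩, k.2⟩ = 1 by rw [← mem_bot, ← hg]; exact ⟨_, rfl⟩
  · exact .inl ⟨hp, K.comap L.subtype, hK.comap _, g, g.range_eq_top.1 hg⟩

lemma cyclicFactorPrimes_subset_union_of_surjective (φ : G →* Q) (hφ : Function.Surjective φ) :
    cyclicFactorPrimes G ⊆ cyclicFactorPrimes φ.ker ∪ cyclicFactorPrimes Q := by
  rintro p ⟨hp, K, hK, f, hf⟩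
  refine (mem_cyclicFactorPrimes_or_subgroupOf_le_ker hp hK f φ.ker).imp_right fun hker => ?_
  let π := φ.subgroupMap K
  have hπ : π.ker ≤ f.ker := fun k hk =>
    hker (by simpa [π, Subtype.ext_iff, mem_subgroupOf] using hk)
  let F := π.liftOfSurjective (φ.subgroupMap_surjective K) ⟨f, hπ⟩
  have hF : F.comp π = f := π.liftOfRightInverse_comp _ _ _
  exact ⟨hp, K.map φ, hK.map hφ, F, .of_comp (hF ▸ hf : Function.Surjective (F.comp π))⟩

lemma cyclicFactorPrimes_subset_union_ker_range (φ : G →* Q) :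
    cyclicFactorPrimes G ⊆ cyclicFactorPrimes φ.ker ∪ cyclicFactorPrimes φ.range := by
  have h :=
    cyclicFactorPrimes_subset_union_of_surjective φ.rangeRestrict φ.rangeRestrict_surjective
  rwa [MonoidHom.ker_rangeRestrict] at h

lemma cyclicFactorPrimes_comap_subset (φ : G →* Q) (S : Subgroup Q) :
    cyclicFactorPrimes (S.comap φ) ⊆
      cyclicFactorPrimes φ.ker ∪ cyclicFactorPrimes ↥(φ.range ⊓ S) := by
  have hle : φ.ker ≤ S.comap φ := φ.ker_le_comap S
  have hker : (φ.subgroupMap (S.comap φ)).ker = φ.ker.subgroupOf (S.comap φ) := by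
    ext; simp [Subtype.ext_iff, mem_subgroupOf]
  have h := cyclicFactorPrimes_subset_union_of_surjective _ (φ.subgroupMap_surjective (S.comap φ))
  rwa [hker, cyclicFactorPrimes_congr (subgroupOfEquivOfLe hle), map_comap_eq] at h

lemma cyclicFactorPrimes_map_subset_range {N : Subgroup G} (hN : N.Normal) (f : G →* Q) :
    cyclicFactorPrimes (N.map f) ⊆ cyclicFactorPrimes f.range := by
  have hle : N.map f ≤ f.range := map_le_range f N
  have hnormal : ((N.map f).subgroupOf f.range).Normal := by
    rw [normal_subgroupOf_iff_le_normalizer hle, MonoidHom.range_eq_map,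
      ← normalizer_eq_top_iff.2 hN]
    exact le_normalizer_map f
  rw [← cyclicFactorPrimes_congr (subgroupOfEquivOfLe hle)]
  exact cyclicFactorPrimes_subset_of_isSubnormal hnormal.isSubnormal

lemma cyclicFactorPrimes_subset_of_iInf_ker_eq_bot {ι : Type*} [Finite ι] (f : ι → G →* Q)
    (hf : ∀ i, Function.Surjective (f i)) (hker : ⨅ i, (f i).ker = ⊥) :
    cyclicFactorPrimes G ⊆ cyclicFactorPrimes Q := by
  classical
  have : Fintype ι := Fintype.ofFinite ι
  suffices h : ∀ s : Finset ι, cyclicFactorPrimes G ⊆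
      cyclicFactorPrimes ↥(⨅ i ∈ s, (f i).ker) ∪ cyclicFactorPrimes Q by
    have h := h Finset.univ
    rwa [show ⨅ i ∈ Finset.univ, (f i).ker = ⊥ by simpa using hker,
      cyclicFactorPrimes_eq_empty (G := (⊥ : Subgroup G)), Set.empty_union] at h
  intro s
  induction s using Finset.induction_on with
  | empty =>
    rw [show ⨅ i ∈ (∅ : Finset ι), (f i).ker = ⊤ by simp,
      cyclicFactorPrimes_congr topEquiv]
    exact Set.subset_union_left
  | insert j s hj ih =>
    set N := ⨅ i ∈ s, (f i).ker
    have hN : N.Normal :=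
      normal_iInf_normal fun i => normal_iInf_normal fun _ => (f i).normal_ker
    let g := (f j).comp N.subtype
    have hker : g.ker = ((f j).ker ⊓ N).subgroupOf N := by
      ext; simp [g, mem_subgroupOf]
    have hrange : cyclicFactorPrimes g.range ⊆ cyclicFactorPrimes Q := by
      have h := cyclicFactorPrimes_map_subset_range hN (f j)
      rwa [(f j).range_eq_top.2 (hf j), cyclicFactorPrimes_congr topEquiv, ← range_subtype N,
        ← MonoidHom.range_comp] at h
    refine ih.trans (Set.union_subset ((cyclicFactorPrimes_subset_union_ker_range g).trans ?_)
      Set.subset_union_right)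
    rw [hker, cyclicFactorPrimes_congr (subgroupOfEquivOfLe inf_le_right), Finset.iInf_insert]
    exact Set.union_subset_union_right _ hrange

lemma Subgroup.Normal.relIndex_dvd_index {K : Subgroup G} (hK : K.Normal) (H : Subgroup G) :
    H.relIndex K ∣ H.index := by
  have := hK
  have hstab : stabilizer K ((1 : G) : G ⧸ H) = H.subgroupOf K := by
    ext k
    change (k : G) • ((1 : G) : G ⧸ H) = _ ↔ _
    simp [mem_subgroupOf, QuotientGroup.eq]
  have h := (IsBlock.orbit_of_normal (N := K) ((1 : G) : G ⧸ H)).ncard_dvd_card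
    ⟨_, mem_orbit_self _⟩
  rwa [relIndex, ← hstab, index_stabilizer, index]

lemma Subgroup.IsSubnormal.relIndex_dvd_index {K : Subgroup G} (hK : K.IsSubnormal)
    (H : Subgroup G) : H.relIndex K ∣ H.index := by
  induction hK with
  | top => rw [relIndex_top_right]
  | step K L hKL _ hN ih =>
    have h := hN.relIndex_dvd_index (H.subgroupOf L)
    rw [relIndex_subgroupOf hKL] at h
    exact h.trans ih

lemma cyclicFactorPrimes_diff_subset_primeFactors_index [Finite G] (S : Subgroup G) :
    cyclicFactorPrimes G \ cyclicFactorPrimes S ⊆ S.index.primeFactors := by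
  rintro p ⟨⟨hp, K, hK, f, hf⟩, hpS⟩
  have hker := (mem_cyclicFactorPrimes_or_subgroupOf_le_ker hp hK f S).resolve_left hpS
  have : Fact p.Prime := ⟨hp⟩
  refine Nat.mem_primeFactors.2 ⟨hp, ?_, S.index_ne_zero_of_finite⟩
  calc p = f.ker.index := by rw [index_ker, f.range_eq_top.2 hf, card_top]; simp
    _ ∣ S.relIndex K := index_dvd_of_le hker
    _ ∣ S.index := hK.relIndex_dvd_index S

end CyclicFactorPrimes

section CompositionSeries

variable {G : Type*} [Group G] {p : ℕ}

def compositionStep : SetRel (Subgroup G) (Subgroup G) :=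
  {AB | AB.1 < AB.2 ∧ (AB.1.subgroupOf AB.2).Normal ∧
    ∀ K : Subgroup G, AB.1 < K → K ≤ AB.2 → (K.subgroupOf AB.2).Normal → K = AB.2}

lemma IsCompositionChain.isSubnormal {n : ℕ} {c : Fin (n + 1) → Subgroup G}
    (hc : IsCompositionChain c) (j : Fin (n + 1)) : (c j).IsSubnormal := by
  induction j using Fin.reverseInduction with
  | last => rw [hc.2.1]; exact .top
  | cast i ih => exact .step _ _ (hc.2.2 i).1.le ih (hc.2.2 i).2.1

lemma exists_relSeries_compositionStep_of_normal [Finite G] {H K : Subgroup G} (hHK : H ≤ K)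
    (hN : (H.subgroupOf K).Normal) :
    ∃ s : RelSeries (compositionStep (G := G)), s.head = H ∧ s.last = K := by
  induction K using WellFoundedLT.induction with
  | _ K ih =>
  obtain rfl | hlt := hHK.eq_or_lt
  · exact ⟨RelSeries.singleton _ H, rfl, rfl⟩
  obtain ⟨M, ⟨hHM, hMK, hMN⟩, hmax⟩ :=
    (Set.toFinite {M : Subgroup G | H ≤ M ∧ M < K ∧ (M.subgroupOf K).Normal}).exists_maximal
      ⟨H, le_rfl, hlt, hN⟩
  have hstep : (M, K) ∈ compositionStep := ⟨hMK, hMN, fun L hML hLK hLN => by_contra fun hne =>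
    not_lt_of_ge (hmax ⟨hHM.trans hML.le, hLK.lt_of_ne hne, hLN⟩ hML.le) hML⟩
  rw [normal_subgroupOf_iff_le_normalizer hHK] at hN
  obtain ⟨s, hs0, hs1⟩ := ih M hMK hHM
    ((normal_subgroupOf_iff_le_normalizer hHM).2 (hMK.le.trans hN))
  exact ⟨s.snoc K (hs1 ▸ hstep), by simp [hs0], by simp⟩

lemma exists_relSeries_compositionStep_of_isSubnormal [Finite G] {H : Subgroup G}
    (hH : H.IsSubnormal) :
    ∃ s : RelSeries (compositionStep (G := G)), s.head = H ∧ s.last = ⊤ := by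
  induction hH with
  | top => exact ⟨RelSeries.singleton _ ⊤, rfl, rfl⟩
  | step H K hHK _ hN ih =>
    obtain ⟨s, hs0, hs1⟩ := ih
    obtain ⟨t, ht0, ht1⟩ := exists_relSeries_compositionStep_of_normal hHK hN
    exact ⟨t.smash s (ht1.trans hs0.symm), by simp [ht0], by simp [hs1]⟩

lemma map_subtype_ker_mem_compositionStep (hp : p.Prime) {K : Subgroup G}
    (f : K →* Multiplicative (ZMod p)) (hf : Function.Surjective f) :
    (f.ker.map K.subtype, K) ∈ compositionStep := by
  have hK₀ : (f.ker.map K.subtype).subgroupOf K = f.ker :=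
    comap_map_eq_self_of_injective K.subtype_injective _
  have hne : f.ker ≠ ⊤ := by
    have : Fact p.Prime := ⟨hp⟩
    obtain ⟨y, hy⟩ := exists_ne (1 : Multiplicative (ZMod p))
    obtain ⟨k, rfl⟩ := hf y
    exact fun h => hy (by rw [← MonoidHom.mem_ker, h]; exact mem_top k)
  refine ⟨(map_subtype_le _).lt_of_ne fun h => hne ?_, ?_, fun L hL hLK _ => ?_⟩
  · rw [h, subgroupOf_self] at hK₀
    exact hK₀.symm
  · change ((f.ker.map K.subtype).subgroupOf K).Normal
    rw [hK₀]
    exact f.normal_ker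
  have hL' : L = (L.subgroupOf K).map K.subtype := by
    rw [subgroupOf_map_subtype, inf_eq_left.2 hLK]
  have hker : f.ker ≤ L.subgroupOf K := by rw [← hK₀]; exact subgroupOf_mono K hL.le
  rcases eq_bot_or_eq_top_of_multiplicative_zmod hp ((L.subgroupOf K).map f) with h | h
  · have : L.subgroupOf K ≤ f.ker := by
      rw [← MonoidHom.comap_bot]; exact map_le_iff_le_comap.1 h.le
    exact absurd (hL' ▸ map_mono this) hL.not_ge
  · refine le_antisymm hLK (subgroupOf_eq_top.1 ?_)
    rw [← sup_eq_left.2 hker, ← comap_map_eq, h, comap_top]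

lemma hasCyclicCompFactor_of_isSubnormal [Finite G] (hp : p.Prime) {K : Subgroup G}
    (hK : K.IsSubnormal) (f : K →* Multiplicative (ZMod p)) (hf : Function.Surjective f) :
    HasCyclicCompFactor G p := by
  obtain ⟨s₁, h₁0, h₁1⟩ :=
    exists_relSeries_compositionStep_of_normal (bot_le (a := f.ker.map K.subtype))
      (by rw [bot_subgroupOf]; infer_instance)
  obtain ⟨s₂, h₂0, h₂1⟩ := exists_relSeries_compositionStep_of_isSubnormal hK
  have hconn : (s₁.last, s₂.head) ∈ compositionStep :=
    h₁1 ▸ h₂0 ▸ map_subtype_ker_mem_compositionStep hp f hf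
  refine ⟨_, s₁.append s₂ hconn, ⟨(RelSeries.head_append ..).trans h₁0,
    (RelSeries.last_append ..).trans h₂1, RelSeries.step _⟩, ⟨s₁.length, by simp⟩, ?_⟩
  have hK₀ :
      s₁.append s₂ hconn (Fin.castSucc ⟨s₁.length, by simp⟩) = f.ker.map K.subtype := by
    rw [← h₁1, ← RelSeries.apply_last, ← RelSeries.append_apply_left s₁ s₂ hconn]
    congr 1
  have hK : s₁.append s₂ hconn (Fin.succ ⟨s₁.length, by simp⟩) = K := by
    rw [← h₂0, ← RelSeries.apply_zero, ← RelSeries.append_apply_right s₁ s₂ hconn]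
    congr 1
  rw [hK₀, hK]
  exact ⟨f, hf, (comap_map_eq_self_of_injective K.subtype_injective f.ker).symm⟩

lemma abelianCompFactorCount_eq_ncard [Finite G] :
    abelianCompFactorCount G = (cyclicFactorPrimes G).ncard := by
  unfold abelianCompFactorCount
  congr 1
  ext p
  refine and_congr_right fun hp => ⟨?_, ?_⟩
  · rintro ⟨n, c, hc, i, f, hf, -⟩
    exact ⟨c i.succ, hc.isSubnormal _, f, hf⟩
  · rintro ⟨K, hK, f, hf⟩
    exact hasCyclicCompFactor_of_isSubnormal hp hK f hf

end CompositionSeries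

section PermRepr

variable {A Δ : Type*} [Group A] [MulAction A Δ] [Finite Δ]

variable (A Δ) in
noncomputable def permRepr : A →* Perm (Fin (Nat.card Δ)) :=
  ((Finite.equivFin Δ).permCongrHom : Perm Δ →* Perm (Fin (Nat.card Δ))).comp (toPermHom A Δ)

lemma permRepr_apply_equivFin (g : A) (a : Δ) :
    permRepr A Δ g (Finite.equivFin Δ a) = Finite.equivFin Δ (g • a) := by
  simp [permRepr, Equiv.permCongrHom, Equiv.permCongr_apply]

lemma isTransitivePermGroup_range_permRepr [IsPretransitive A Δ] :
    IsTransitivePermGroup (permRepr A Δ).range := by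
  intro a b
  obtain ⟨g, hg⟩ := exists_smul_eq A ((Finite.equivFin Δ).symm a) ((Finite.equivFin Δ).symm b)
  refine ⟨_, ⟨g, rfl⟩, ?_⟩
  rw [← (Finite.equivFin Δ).apply_symm_apply a, permRepr_apply_equivFin, hg,
    Equiv.apply_symm_apply]

lemma comap_permRepr_stabilizer (a : Δ) :
    (stabilizer (Perm (Fin (Nat.card Δ))) (Finite.equivFin Δ a)).comap (permRepr A Δ) =
      stabilizer A a := by
  ext g
  simp [mem_stabilizer_iff, Perm.smul_def, permRepr_apply_equivFin]

lemma mem_ker_permRepr {g : A} : g ∈ (permRepr A Δ).ker ↔ ∀ a : Δ, g • a = a := by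
  simp [permRepr, Equiv.ext_iff, Equiv.permCongrHom, (Finite.equivFin Δ).symm.surjective.forall]

end PermRepr

section PermGroups

variable {Ω : Type*}

lemma IsTransitivePermGroup.isPretransitive {G : Subgroup (Perm Ω)}
    (hG : IsTransitivePermGroup G) : IsPretransitive G Ω := ⟨fun a b => by
  obtain ⟨g, hg, h⟩ := hG a b
  exact ⟨⟨g, hg⟩, h⟩⟩

lemma stabilizer_eq_inf_stabilizer_subgroupOf (G : Subgroup (Perm Ω)) (x : Ω) :
    stabilizer G x = (G ⊓ stabilizer (Perm Ω) x).subgroupOf G := by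
  ext; simp [mem_subgroupOf, Subgroup.smul_def, Perm.smul_def]

lemma cyclicFactorPrimes_diff_subset_primeFactors_card [Finite Ω] {X : Subgroup (Perm Ω)}
    (hX : IsTransitivePermGroup X) (a : Ω) :
    cyclicFactorPrimes X \ cyclicFactorPrimes ↥(X ⊓ stabilizer (Perm Ω) a) ⊆
      (Nat.card Ω).primeFactors := by
  have := hX.isPretransitive
  have h := cyclicFactorPrimes_diff_subset_primeFactors_index (stabilizer X a)
  rwa [index_stabilizer_of_transitive, stabilizer_eq_inf_stabilizer_subgroupOf,
    cyclicFactorPrimes_congr (subgroupOfEquivOfLe inf_le_left)] at h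

lemma exists_isBlock_mem_of_not_isPrimitivePermGroup [Finite Ω] {G : Subgroup (Perm Ω)}
    (htrans : IsTransitivePermGroup G) (hnprim : ¬ IsPrimitivePermGroup G) (x : Ω) :
    ∃ B : Set Ω, IsBlock G B ∧ x ∈ B ∧ 2 ≤ Nat.card B ∧ 2 ≤ Nat.card (orbit G B) ∧
      Nat.card B * Nat.card (orbit G B) = Nat.card Ω := by
  have := htrans.isPretransitive
  obtain ⟨B, hB, hns, hne⟩ : ∃ B, IsBlockOf G B ∧ ¬B.Subsingleton ∧ B ≠ Set.univ := by
    simpa [IsPrimitivePermGroup, htrans, not_or] using hnprim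
  have hB' : IsBlock G B := isBlock_iff_smul_eq_or_disjoint.2 fun g => by
    rw [← Set.image_smul]
    exact hB g g.2
  obtain ⟨b, hb⟩ := (Set.not_subsingleton_iff.1 hns).nonempty
  obtain ⟨g, rfl⟩ := exists_smul_eq G b x
  have hcard : Nat.card ↥(g • B) * Nat.card (orbit G (g • B)) = Nat.card Ω := by
    simpa [Nat.card_coe_set_eq] using
      (hB'.translate g).ncard_block_mul_ncard_orbit_eq ⟨_, b, hb, rfl⟩
  have ht : 2 ≤ Nat.card ↥(g • B) := by
    rw [Nat.card_coe_set_eq, Set.ncard_smul_set]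
    exact Set.one_lt_ncard_iff_nontrivial.2 (Set.not_subsingleton_iff.1 hns)
  have htn : Nat.card ↥(g • B) < Nat.card Ω := by
    rw [Nat.card_coe_set_eq, Set.ncard_smul_set, ← Set.ncard_univ]
    exact Set.ncard_lt_ncard (Set.ssubset_univ_iff.2 hne)
  refine ⟨g • B, hB'.translate g, Set.smul_mem_smul_set hb, ht, ?_, hcard⟩
  by_contra! hm
  have := Nat.mul_le_mul_left (Nat.card ↥(g • B)) (Nat.le_of_lt_succ hm)
  omega

end PermGroups

section Blocks

variable {H Ω : Type*} [Group H] [MulAction H Ω] {B : Set Ω}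

lemma MulAction.IsBlock.isPretransitive_stabilizer [IsPretransitive H Ω] (hB : IsBlock H B) :
    IsPretransitive (stabilizer H B) B := ⟨fun a b => by
  obtain ⟨g, hg⟩ := exists_smul_eq H (a : Ω) b
  exact ⟨⟨g, hB.smul_eq_of_mem a.2 (hg ▸ b.2)⟩, Subtype.ext hg⟩⟩

lemma stabilizer_subtype_eq_subgroupOf {x : Ω} (hx : x ∈ B) :
    stabilizer (stabilizer H B) (⟨x, hx⟩ : B) =
      (stabilizer H x).subgroupOf (stabilizer H B) := by
  ext; simp [mem_subgroupOf, Subtype.ext_iff]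

lemma stabilizer_orbit_self (B : Set Ω) :
    stabilizer H (⟨B, mem_orbit_self B⟩ : orbit H B) = stabilizer H B := by
  ext; simp [Subtype.ext_iff]

variable [Finite Ω] [IsPretransitive H Ω] [FaithfulSMul H Ω]

/-- The kernel `K` of the action on the translates of `B` is a subdirect product of copies of
its restriction `K^B` to `B`: conjugating by `h` turns restriction to `h • B` into restriction
to `B`, and these restrictions jointly separate the points of `Ω`. -/
lemma cyclicFactorPrimes_ker_permRepr_orbit_subset [Finite H] {x : Ω} (hx : x ∈ B) :
    cyclicFactorPrimes (permRepr H (orbit H B)).ker ⊆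
      cyclicFactorPrimes (permRepr (stabilizer H B) B).range := by
  set K := (permRepr H (orbit H B)).ker
  set ρ := permRepr (stabilizer H B) B
  have hKB : K ≤ stabilizer H B := fun k hk =>
    congrArg Subtype.val (mem_ker_permRepr.1 hk ⟨B, mem_orbit_self B⟩)
  let ρK := ρ.comp (inclusion hKB)
  have hker :
      ⨅ h : H, (ρK.rangeRestrict.comp (MulAut.conjNormal h⁻¹).toMonoidHom).ker = ⊥ := by
    refine eq_bot_iff.2 fun k hk =>
      (mem_bot).2 (Subtype.ext (eq_of_smul_eq_smul (α := Ω) fun y => ?_))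
    obtain ⟨h, rfl⟩ := exists_smul_eq H x y
    have hk' : ρ (inclusion hKB (MulAut.conjNormal h⁻¹ k)) = 1 :=
      congrArg Subtype.val (mem_iInf.1 hk h)
    have := congrArg Subtype.val (mem_ker_permRepr.1 hk' ⟨x, hx⟩)
    simpa [mul_smul, inv_smul_eq_iff] using this
  have h := cyclicFactorPrimes_subset_of_iInf_ker_eq_bot
    (fun h : H => ρK.rangeRestrict.comp (MulAut.conjNormal h⁻¹).toMonoidHom)
    (fun h => ρK.rangeRestrict_surjective.comp (MulAut.conjNormal h⁻¹).surjective) hker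
  rw [MonoidHom.range_comp, inclusion_range] at h
  exact h.trans (cyclicFactorPrimes_map_subset_range inferInstance ρ)

lemma cyclicFactorPrimes_stabilizer_subset [Finite H] (hB : IsBlock H B) {x : Ω} (hx : x ∈ B) :
    cyclicFactorPrimes (stabilizer H x) ⊆
      cyclicFactorPrimes ↥((permRepr (stabilizer H B) B).range ⊓
          stabilizer (Perm (Fin (Nat.card B))) (Finite.equivFin B ⟨x, hx⟩)) ∪
        cyclicFactorPrimes ↥((permRepr H (orbit H B)).range ⊓
          stabilizer (Perm (Fin (Nat.card (orbit H B))))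
            (Finite.equivFin (orbit H B) ⟨B, mem_orbit_self B⟩)) ∪
        (Nat.card B).primeFactors := by
  set Xα := (permRepr (stabilizer H B) B).range ⊓
    stabilizer (Perm (Fin (Nat.card B))) (Finite.equivFin B ⟨x, hx⟩)
  have : IsPretransitive (stabilizer H B) B := hB.isPretransitive_stabilizer
  have hx_sub : cyclicFactorPrimes (stabilizer H x) ⊆
      cyclicFactorPrimes (permRepr (stabilizer H B) B).ker ∪ cyclicFactorPrimes Xα := by
    rw [cyclicFactorPrimes_congr (subgroupOfEquivOfLe (hB.stabilizer_le hx)).symm,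
      ← stabilizer_subtype_eq_subgroupOf hx, ← comap_permRepr_stabilizer (A := stabilizer H B)]
    exact cyclicFactorPrimes_comap_subset _ _
  have hB_sub := cyclicFactorPrimes_comap_subset (permRepr H (orbit H B))
    (stabilizer _ (Finite.equivFin (orbit H B) ⟨B, mem_orbit_self B⟩))
  rw [comap_permRepr_stabilizer, stabilizer_orbit_self] at hB_sub
  have hker_sub := cyclicFactorPrimes_subset_of_isSubnormal
    (permRepr (stabilizer H B) B).normal_ker.isSubnormal
  have hX_diff := cyclicFactorPrimes_diff_subset_primeFactors_card
    (isTransitivePermGroup_range_permRepr (A := stabilizer H B) (Δ := B))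
    (Finite.equivFin B ⟨x, hx⟩)
  have hK_sub := cyclicFactorPrimes_ker_permRepr_orbit_subset (H := H) hx
  rw [Nat.card_fin] at hX_diff
  intro p hp
  rcases hx_sub hp with hp | hp
  · rcases hB_sub (hker_sub hp) with hp | hp
    · by_cases hpα : p ∈ cyclicFactorPrimes Xα
      · exact .inl (.inl hpα)
      · exact .inr (hX_diff ⟨hK_sub hp, hpα⟩)
    · exact .inl (.inr hp)
  · exact .inl (.inl hp)

end Blocks

lemma card_primeFactors_le_logb {n N : ℕ} (hn : 0 < n) (hnN : n ≤ N) :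
    (n.primeFactors.card : ℝ) ≤ Real.logb 2 N := by
  have h : 2 ^ n.primeFactors.card ≤ N :=
    calc 2 ^ n.primeFactors.card ≤ ∏ p ∈ n.primeFactors, p :=
          Finset.pow_card_le_prod _ _ _ fun p hp => (Nat.prime_of_mem_primeFactors hp).two_le
      _ ≤ n := Nat.le_of_dvd hn (Nat.prod_primeFactors_dvd n)
      _ ≤ N := hnN
  rw [Real.le_logb_iff_rpow_le one_lt_two (by norm_cast; omega), Real.rpow_natCast]
  exact_mod_cast h

lemma ncard_le_add_logb_of_subset_union_primeFactors {s a b : Set ℕ} {n N : ℕ} (ha : a.Finite)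
    (hb : b.Finite) (hn : 0 < n) (hnN : n ≤ N) (h : s ⊆ a ∪ b ∪ n.primeFactors) :
    (s.ncard : ℝ) ≤ a.ncard + b.ncard + Real.logb 2 N := by
  have hcount : s.ncard ≤ a.ncard + b.ncard + n.primeFactors.card := by
    refine (Set.ncard_le_ncard h ((ha.union hb).union (Finset.finite_toSet _))).trans ?_
    rw [← Set.ncard_coe_finset]
    exact (Set.ncard_union_le _ _).trans (Nat.add_le_add_right (Set.ncard_union_le _ _) _)
  have := card_primeFactors_le_logb hn hnN
  have : (s.ncard : ℝ) ≤ a.ncard + b.ncard + n.primeFactors.card := by exact_mod_cast hcount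
  linarith

/-- Reduction for transitive groups. Let `G` be a transitive but
imprimitive permutation group on a finite set `Ω` with `|Ω| = n` and `G_x` a point
stabiliser. Then there are transitive groups `X`, `Y` of degrees `t, m ≥ 2` with `t·m ≤ n`,
with point stabilisers `X_α`, `Y_β`, such that
`|Comp_A(G_x)| ≤ |Comp_A(X_α)| + |Comp_A(Y_β)| + log₂ n`. -/
theorem reduction_transitive {Ω : Type} [Fintype Ω] (G : Subgroup (Equiv.Perm Ω))
    (htrans : IsTransitivePermGroup G) (hnprim : ¬ IsPrimitivePermGroup G) (x : Ω) :
    ∃ (t m : ℕ) (X : Subgroup (Equiv.Perm (Fin t))) (Y : Subgroup (Equiv.Perm (Fin m)))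
      (α : Fin t) (β : Fin m),
      2 ≤ t ∧ 2 ≤ m ∧ t * m ≤ Fintype.card Ω ∧
      IsTransitivePermGroup X ∧ IsTransitivePermGroup Y ∧
      (abelianCompFactorCount ↥(G ⊓ MulAction.stabilizer (Equiv.Perm Ω) x) : ℝ) ≤
        (abelianCompFactorCount ↥(X ⊓ MulAction.stabilizer (Equiv.Perm (Fin t)) α) : ℝ) +
        (abelianCompFactorCount ↥(Y ⊓ MulAction.stabilizer (Equiv.Perm (Fin m)) β) : ℝ) +
        Real.logb 2 (Fintype.card Ω) := by
  rw [← Nat.card_eq_fintype_card]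
  obtain ⟨B, hB, hxB, ht, hm, hcard⟩ :=
    exists_isBlock_mem_of_not_isPrimitivePermGroup htrans hnprim x
  have := htrans.isPretransitive
  have := hB.isPretransitive_stabilizer
  have hsub := cyclicFactorPrimes_stabilizer_subset hB hxB
  rw [stabilizer_eq_inf_stabilizer_subgroupOf,
    cyclicFactorPrimes_congr (subgroupOfEquivOfLe inf_le_left)] at hsub
  refine ⟨_, _, (permRepr (stabilizer G B) B).range, (permRepr G (orbit G B)).range,
    Finite.equivFin B ⟨x, hxB⟩, Finite.equivFin (orbit G B) ⟨B, mem_orbit_self B⟩, ht, hm,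
    hcard.le, isTransitivePermGroup_range_permRepr, isTransitivePermGroup_range_permRepr, ?_⟩
  simp only [abelianCompFactorCount_eq_ncard]
  exact ncard_le_add_logb_of_subset_union_primeFactors cyclicFactorPrimes_finite
    cyclicFactorPrimes_finite (by omega) (hcard ▸ Nat.le_mul_of_pos_right _ (by omega)) hsub
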